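/- arXiv:1303.3323 — 2 statements merged into one kernel-verified Lean document; each statement's English description precedes it below -/
import Mathlib

section
/- Let c : Fin k → Fin L assign to each letter of a k-letter alphabet one of L ≥ 3 categories, with every category nonempty (c surjective), and let n ≥ 2. Then there exists a U-cycle for the set of non-passwords of length n, i.e., the set of words w of length n over Fin k for which some category ℓ : Fin L satisfies c(w i) ≠ ℓ for all i. -/
/-- A U-cycle for a finite set `S` of `n`-letter words over the alphabet `Fin k`. -/
def IsUCycle {n k : ℕ} (S : Finset (Fin n → Fin k)) (s : ZMod S.card → Fin k) : Prop :=
  Set.BijOn (fun i : ZMod S.card => fun j : Fin n => s (i + ((j : ℕ) : ZMod S.card)))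
    Set.univ ↑S

/-- `w` is a non-password with respect to the category map `c`: some category `ℓ`
has no representative among the letters of `w`. -/
def NonPassword {n k L : ℕ} (c : Fin k → Fin L) (w : Fin n → Fin k) : Prop :=
  ∃ ℓ : Fin L, ∀ i : Fin n, c (w i) ≠ ℓ


instance {n k L : ℕ} (c : Fin k → Fin L) :
    DecidablePred (fun w : Fin n → Fin k => NonPassword c w) := fun w =>
  inferInstanceAs (Decidable (∃ ℓ : Fin L, ∀ i : Fin n, c (w i) ≠ ℓ))

/-!
A non-password `w` of length `m + 1` is an edge from `Fin.init w` to `Fin.tail w`, so a U-cycle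
is an Eulerian circuit of this de Bruijn-type multigraph. Non-passwords are closed under rotation,
which balances in- and out-degrees, and when `L ≥ 3` any two non-passwords are joined by shift
paths through a constant word of a third category.

A multigraph is encoded by its edge type `α` with source and target maps `f g : α → V`. Balance
gives a permutation `π` of the edges with `f (π x) = g x`, i.e. a decomposition into closed
walks; composing `π` with the transposition of two edges in different cycles that share their
target merges those cycles, so a `π` whose cycle through a fixed edge is largest is a single
cycle, which `ZMod (Nat.card α)` then enumerates.
-/

open Equiv Function Relation

namespace Equiv.Perm

variable {α : Type*}

theorem SameCycle.of_forall_ne [Finite α] {π π' : Perm α} {p x : α}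
    (h : ∀ y, π.SameCycle y p → y ≠ p → π' y = π y) (hx : π.SameCycle x p) :
    π'.SameCycle x p := by
  obtain ⟨t, ht⟩ := hx.exists_nat_pow_eq
  induction t generalizing x with
  | zero => exact ht ▸ SameCycle.refl _ _
  | succ t ih =>
    rw [pow_succ, mul_apply] at ht
    have hπx : π'.SameCycle (π x) p := ih (sameCycle_apply_left.2 hx) ht
    by_cases hxp : x = p
    · exact hxp ▸ SameCycle.refl _ _
    · rw [← h x hx hxp] at hπx
      exact sameCycle_apply_left.1 hπx

theorem sameCycle_mul_swap [Finite α] [DecidableEq α] {π : Perm α} {p q x : α}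
    (hpq : ¬π.SameCycle p q) (hx : π.SameCycle x p ∨ π.SameCycle x q) :
    (π * swap p q).SameCycle x p := by
  have agree : ∀ r, r = p ∨ r = q → ∀ y, π.SameCycle y r → y ≠ r →
      (π * swap p q) y = π y := by
    rintro r hr y hy hyr
    have hypq : y ≠ p ∧ y ≠ q := by
      rcases hr with rfl | rfl
      · exact ⟨hyr, fun hyq => hpq (hyq ▸ hy).symm⟩
      · exact ⟨fun hyp => hpq (hyp ▸ hy), hyr⟩
    rw [mul_apply, swap_apply_of_ne_of_ne hypq.1 hypq.2]
  have hqp : (π * swap p q).SameCycle q p :=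
    (SameCycle.of_forall_ne (agree q (.inr rfl)) (sameCycle_apply_left.2 .rfl)).symm.trans
      (SameCycle.symm ⟨1, by simp⟩)
  rcases hx with hx | hx
  · exact SameCycle.of_forall_ne (agree p (.inl rfl)) hx
  · exact (SameCycle.of_forall_ne (agree q (.inr rfl)) hx).trans hqp

theorem exists_equiv_zmod_of_sameCycle [Finite α] {π : Perm α} (hπ : ∀ x y, π.SameCycle x y)
    (x₀ : α) : ∃ e : ZMod (Nat.card α) ≃ α, ∀ i, e (i + 1) = π (e i) := by
  have horbit : ∀ y, y ∈ MulAction.orbit (Subgroup.zpowers π) x₀ := fun y => by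
    obtain ⟨i, hi⟩ := hπ x₀ y
    exact ⟨⟨π ^ i, i, rfl⟩, hi⟩
  let E := (MulAction.orbitZPowersEquiv π x₀).symm.trans (subtypeUnivEquiv horbit)
  have hcard : minimalPeriod π x₀ = Nat.card α := by
    simpa using Nat.card_congr E
  suffices ∃ e : ZMod (minimalPeriod π x₀) ≃ α, ∀ i, e (i + 1) = π (e i) by rwa [hcard] at this
  have hE : ∀ k : ℤ, E k = (π ^ k) x₀ := fun k => by
    show ((MulAction.orbitZPowersEquiv π x₀).symm k : α) = _
    rw [MulAction.orbitZPowersEquiv_symm_apply']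
    rfl
  refine ⟨E, fun i => ?_⟩
  obtain ⟨k, rfl⟩ := ZMod.intCast_surjective i
  rw [← Int.cast_one, ← Int.cast_add, hE, hE, add_comm, zpow_one_add, mul_apply]

end Equiv.Perm

section Euler

variable {α V : Type*} [Finite α] (f g : α → V)

theorem exists_perm_merge_cycles {π : Perm α} (hπ : ∀ x, f (π x) = g x) {u u' : α}
    (hadj : g u = f u' ∨ g u' = f u) (hu : ¬π.SameCycle u u') :
    ∃ π' : Perm α, (∀ x, f (π' x) = g x) ∧
      ∀ x, π.SameCycle x u ∨ π.SameCycle x u' → π'.SameCycle x u := by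
  classical
  have hswap : ∀ p q, g p = g q → ∀ x, f ((π * swap p q) x) = g x := fun p q hpq x => by
    rw [Perm.mul_apply, hπ, apply_swap_eq_self hpq]
  rcases hadj with h | h
  · have hg : g u = g (π.symm u') := by rw [h, ← hπ, apply_symm_apply]
    refine ⟨_, hswap _ _ hg, fun x hx => Perm.sameCycle_mul_swap ?_ ?_⟩
    · rwa [Perm.sameCycle_symm_apply_right]
    · rwa [Perm.sameCycle_symm_apply_right]
  · have hg : g (π.symm u) = g u' := by rw [← hπ, apply_symm_apply, ← h]
    have hu₀ : ∀ x, π.SameCycle x u → π.SameCycle x (π.symm u) := fun x hx => by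
      rwa [Perm.sameCycle_symm_apply_right]
    have hne : ¬π.SameCycle (π.symm u) u' := by rwa [Perm.sameCycle_symm_apply_left]
    refine ⟨_, hswap _ _ hg, fun x hx => ?_⟩
    exact (Perm.sameCycle_mul_swap hne (hx.imp_left (hu₀ x))).trans
      (Perm.sameCycle_mul_swap hne (.inl (hu₀ u .rfl))).symm

theorem exists_perm_forall_sameCycle_of_balanced [Nonempty α]
    (hbal : ∀ v, Nat.card {x // f x = v} = Nat.card {x // g x = v})
    (hconn : ∀ x y, ReflTransGen (fun x y => g x = f y ∨ g y = f x) x y) :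
    ∃ π : Perm α, (∀ x, f (π x) = g x) ∧ ∀ x y, π.SameCycle x y := by
  classical
  have := Fintype.ofFinite α
  obtain ⟨x₀⟩ := ‹Nonempty α›
  let cycle (π : Perm α) : Finset α := Finset.univ.filter (π.SameCycle x₀)
  let successorPerms : Finset (Perm α) := Finset.univ.filter fun π => ∀ x, f (π x) = g x
  have hne : successorPerms.Nonempty :=
    ⟨ofFiberEquiv fun v => (Finite.card_eq.1 (hbal v)).some.symm,
      Finset.mem_filter.2 ⟨Finset.mem_univ _, ofFiberEquiv_map _⟩⟩
  obtain ⟨π, hπ, hmax⟩ := successorPerms.exists_max_image (fun π => (cycle π).card) hne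
  simp only [successorPerms, Finset.mem_filter, Finset.mem_univ, true_and] at hπ hmax
  have hclosed : ∀ u u', (g u = f u' ∨ g u' = f u) → π.SameCycle x₀ u → π.SameCycle x₀ u' := by
    intro u u' hadj hu
    by_contra hu'
    obtain ⟨π', hπ', hmerge⟩ := exists_perm_merge_cycles f g hπ hadj fun h => hu' (hu.trans h)
    have hgrow : insert u' (cycle π) ⊆ cycle π' := by
      intro z hz
      simp only [cycle, Finset.mem_insert, Finset.mem_filter, Finset.mem_univ, true_and] at hz ⊢
      refine (hmerge x₀ (.inl hu)).trans (hmerge z ?_).symm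
      rcases hz with rfl | hz
      exacts [.inr .rfl, .inl (hz.symm.trans hu)]
    have := Finset.card_le_card hgrow
    rw [Finset.card_insert_of_notMem (by simpa [cycle] using hu')] at this
    exact absurd (hmax π' hπ') (by omega)
  have hreach : ∀ y, π.SameCycle x₀ y := fun y => by
    induction hconn x₀ y with
    | refl => rfl
    | tail _ hadj ih => exact hclosed _ _ hadj ih
  exact ⟨π, hπ, fun x y => (hreach x).symm.trans (hreach y)⟩

theorem exists_eulerian_circuit [Nonempty α]
    (hbal : ∀ v, Nat.card {x // f x = v} = Nat.card {x // g x = v})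
    (hconn : ∀ x y, ReflTransGen (fun x y => g x = f y ∨ g y = f x) x y) :
    ∃ e : ZMod (Nat.card α) ≃ α, ∀ i, g (e i) = f (e (i + 1)) := by
  obtain ⟨π, hπ, hcycle⟩ := exists_perm_forall_sameCycle_of_balanced f g hbal hconn
  obtain ⟨e, he⟩ := Perm.exists_equiv_zmod_of_sameCycle hcycle (Classical.arbitrary α)
  exact ⟨e, fun i => by rw [he, hπ]⟩

end Euler

section Words

variable {m k : ℕ}

theorem isUCycle_of_tail_eq_init {S : Finset (Fin (m + 1) → Fin k)} (e : ZMod S.card ≃ S)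
    (he : ∀ i, Fin.tail (e i).1 = Fin.init (e (i + 1)).1) : IsUCycle S fun i => (e i).1 0 := by
  have hwindow : ∀ i (j : Fin (m + 1)), (e (i + (j : ℕ))).1 0 = (e i).1 j := by
    rintro i ⟨j, hj⟩
    induction j generalizing i with
    | zero => simp
    | succ j ih =>
      calc (e (i + ((j + 1 : ℕ) : ZMod S.card))).1 0
          = (e (i + 1 + (j : ℕ))).1 0 := by
            rw [Nat.cast_succ, add_comm _ (1 : ZMod S.card), add_assoc]
        _ = Fin.init (e (i + 1)).1 ⟨j, by omega⟩ := ih (i + 1) (by omega)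
        _ = (e i).1 ⟨j + 1, hj⟩ := by rw [← he]; rfl
  unfold IsUCycle
  simp only [hwindow]
  refine ⟨fun i _ => (e i).2, fun i _ i' _ h => e.injective (Subtype.ext h),
    fun w hw => ⟨e.symm ⟨w, hw⟩, Set.mem_univ _, by simp⟩⟩

theorem exists_isUCycle_of_balanced (S : Finset (Fin (m + 1) → Fin k)) (hS : S.Nonempty)
    (hbal : ∀ v, Nat.card {w : S // Fin.init w.1 = v} = Nat.card {w : S // Fin.tail w.1 = v})
    (hconn : ∀ x y : S,
      ReflTransGen (fun x y : S => Fin.tail x.1 = Fin.init y.1 ∨ Fin.tail y.1 = Fin.init x.1) x y) :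
    ∃ s, IsUCycle S s := by
  have := hS.to_subtype
  obtain ⟨e, he⟩ : ∃ e : ZMod S.card ≃ S, ∀ i, Fin.tail (e i).1 = Fin.init (e (i + 1)).1 :=
    Nat.card_eq_finsetCard S ▸ exists_eulerian_circuit _ _ hbal hconn
  exact ⟨_, isUCycle_of_tail_eq_init e he⟩

theorem init_comp_finRotate (w : Fin (m + 1) → Fin k) :
    Fin.init (w ∘ finRotate (m + 1)) = Fin.tail w := by
  funext j
  simp [Fin.init, Fin.tail, Fin.coeSucc_eq_succ]

theorem card_init_eq_card_tail_of_rotate {S : Finset (Fin (m + 1) → Fin k)}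
    (hS : ∀ w, w ∘ finRotate (m + 1) ∈ S ↔ w ∈ S) (v : Fin m → Fin k) :
    Nat.card {w : S // Fin.init w.1 = v} = Nat.card {w : S // Fin.tail w.1 = v} := by
  let rotate : S ≃ S :=
    ((finRotate (m + 1)).symm.arrowCongr (Equiv.refl _)).subtypeEquiv fun w => (hS w).symm
  refine (Nat.card_congr (rotate.subtypeEquiv fun w => ?_)).symm
  rw [show (rotate w).1 = w.1 ∘ finRotate (m + 1) from rfl, init_comp_finRotate]

theorem reflTransGen_tail_eq_init {p : (Fin (m + 1) → Fin k) → Prop} {P : Fin k → Prop}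
    (hp : ∀ w, (∀ i, P (w i)) → p w) {w u : Fin (m + 1) → Fin k}
    (hw : ∀ i, P (w i)) (hu : ∀ i, P (u i)) :
    ReflTransGen (fun x y : Subtype p => Fin.tail x.1 = Fin.init y.1)
      ⟨w, hp w hw⟩ ⟨u, hp u hu⟩ := by
  let z (t : ℕ) : Fin k :=
    if h : t < m + 1 then w ⟨t, h⟩ else u ⟨min (t - (m + 1)) m, by omega⟩
  have hz : ∀ t, P (z t) := fun t => by
    unfold z
    split_ifs
    exacts [hw _, hu _]
  let window (t : ℕ) : Subtype p := ⟨fun j => z (j + t), hp _ fun j => hz _⟩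
  have hstart : window 0 = ⟨w, hp w hw⟩ := Subtype.ext <| funext fun j => by
    simp only [window, z, add_zero, dif_pos j.isLt]
  have hend : window (m + 1) = ⟨u, hp u hu⟩ := Subtype.ext <| funext fun j => by
    simp only [window, z, dif_neg (by omega : ¬(j : ℕ) + (m + 1) < m + 1)]
    exact congrArg u (Fin.ext (by dsimp only; omega))
  have hpath : ∀ t, ReflTransGen (fun x y : Subtype p => Fin.tail x.1 = Fin.init y.1)
      (window 0) (window t) := fun t => by
    induction t with
    | zero => rfl
    | succ t ih =>
      refine ih.tail (funext fun j => ?_)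
      simp only [window, Fin.tail, Fin.init, Fin.val_succ, Fin.val_castSucc]
      congr 1
      omega
  rw [← hstart, ← hend]
  exact hpath (m + 1)

end Words

theorem exists_ne_ne_of_two_lt_card {β : Type*} [Fintype β] (h : 2 < Fintype.card β) (a b : β) :
    ∃ d, d ≠ a ∧ d ≠ b := by
  classical
  have hcard : ({a, b} : Finset β).card < (Finset.univ : Finset β).card :=
    Finset.card_le_two.trans_lt (by rwa [Finset.card_univ])
  obtain ⟨d, -, hd⟩ := Finset.exists_mem_notMem_of_card_lt_card hcard
  simp only [Finset.mem_insert, Finset.mem_singleton, not_or] at hd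
  exact ⟨d, hd⟩

section NonPasswords

variable {k L : ℕ} (c : Fin k → Fin L)

def nonPasswords (n : ℕ) : Finset (Fin n → Fin k) :=
  Finset.univ.filter fun w => NonPassword c w

theorem mem_nonPasswords {n : ℕ} {w : Fin n → Fin k} :
    w ∈ nonPasswords c n ↔ NonPassword c w := by
  simp [nonPasswords]

theorem nonPassword_comp_perm {n : ℕ} (w : Fin n → Fin k) (σ : Perm (Fin n)) :
    NonPassword c (w ∘ σ) ↔ NonPassword c w :=
  exists_congr fun ℓ => σ.forall_congr_right (q := fun i => c (w i) ≠ ℓ)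

theorem reflTransGen_nonPasswords (hL : 3 ≤ L) (hc : Surjective c) {m : ℕ}
    (x y : nonPasswords c (m + 1)) :
    ReflTransGen (fun x y : nonPasswords c (m + 1) => Fin.tail x.1 = Fin.init y.1) x y := by
  have hmem : ∀ ℓ (w : Fin (m + 1) → Fin k), (∀ i, c (w i) ≠ ℓ) → w ∈ nonPasswords c (m + 1) :=
    fun ℓ w hw => (mem_nonPasswords c).2 ⟨ℓ, hw⟩
  obtain ⟨ℓx, hx⟩ := (mem_nonPasswords c).1 x.2
  obtain ⟨ℓy, hy⟩ := (mem_nonPasswords c).1 y.2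
  obtain ⟨ℓ, hℓx, hℓy⟩ := exists_ne_ne_of_two_lt_card (by rwa [Fintype.card_fin]) ℓx ℓy
  obtain ⟨a, rfl⟩ := hc ℓ
  exact (reflTransGen_tail_eq_init (P := (c · ≠ ℓx)) (hmem ℓx) hx fun _ => hℓx).trans
    (reflTransGen_tail_eq_init (P := (c · ≠ ℓy)) (hmem ℓy) (fun _ => hℓy) hy)

end NonPasswords

/-- If `c : Fin k → Fin L` assigns to each letter one of `L ≥ 3` categories, every
category is nonempty, and `n ≥ 2`, then there exists a U-cycle for the set of
non-passwords of length `n` over `Fin k`. -/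
theorem exists_ucycle_non_passwords (n k L : ℕ) (c : Fin k → Fin L)
    (hL : 3 ≤ L) (hc : Function.Surjective c) (hn : 2 ≤ n) :
    ∃ s : ZMod (Finset.univ.filter
        (fun w : Fin n → Fin k => NonPassword c w)).card → Fin k,
      IsUCycle (Finset.univ.filter (fun w : Fin n → Fin k => NonPassword c w)) s := by
  obtain ⟨m, rfl⟩ : ∃ m, n = m + 1 := ⟨n - 1, by omega⟩
  have hnonempty : (nonPasswords c (m + 1)).Nonempty := by
    obtain ⟨a, -⟩ := hc ⟨0, by omega⟩
    obtain ⟨ℓ, hℓ, -⟩ := exists_ne_ne_of_two_lt_card (by rwa [Fintype.card_fin]) (c a) (c a)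
    exact ⟨fun _ => a, (mem_nonPasswords c).2 ⟨ℓ, fun _ => hℓ.symm⟩⟩
  refine exists_isUCycle_of_balanced (nonPasswords c (m + 1)) hnonempty
    (card_init_eq_card_tail_of_rotate fun w => ?_) fun x y => ?_
  · simp only [mem_nonPasswords, nonPassword_comp_perm]
  · exact ReflTransGen.mono (fun _ _ => Or.inl) _ _ (reflTransGen_nonPasswords c hL hc x y)
end

section
/- Let n ≥ 4. For every illegal ranking w of n contestants, there exists a finite sequence of illegal rankings of n contestants, beginning with w and ending with the constant ranking whose every entry is 2, in which every consecutive pair of words overlaps. -/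
/-!
Extend an illegal word one letter at a time, always appending a nonzero letter that keeps
the word illegal. Such a letter exists: if `1`, `2` and `n - 1` all made legal words with
the same first `n - 1` letters, then `n - 1` forces every other letter below `n - 1`,
comparing with `1` then forces every other letter to be at most `1`, and then the letter `2`
would have `n - 1 ≠ 2` smaller letters. After `n` steps the word has no letter `0`, so it is
illegal whatever we append, and `n` further appended `1`s reach the word `22…2`.
-/

/-- Two words `w, w'` of length `n` overlap if the last `n−1` letters of `w` equal the
first `n−1` letters of `w'`. -/
def Overlap {n k : ℕ} (w w' : Fin n → Fin k) : Prop :=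
  ∀ i j : Fin n, (j : ℕ) = (i : ℕ) + 1 → w j = w' i

/-- A ranking `r : Fin n → Fin n` (value `i` represents rank `i+1`) is legal if the rank
of each contestant equals 1 plus the number of contestants with strictly smaller rank
(0-indexed: `r i = #{j | r j < r i}`). -/
def LegalRanking {n : ℕ} (r : Fin n → Fin n) : Prop :=
  ∀ i : Fin n, (r i : ℕ) = (Finset.univ.filter (fun j : Fin n => r j < r i)).card

open Finset Function

def shiftIn {α : Type*} {n : ℕ} (v : Fin n → α) (a : α) : Fin n → α :=
  fun i => if h : (i : ℕ) + 1 < n then v ⟨i + 1, h⟩ else a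

theorem overlap_shiftIn {n k : ℕ} (v : Fin n → Fin k) (a : Fin k) : Overlap v (shiftIn v a) := by
  intro i j hj
  simp only [shiftIn, dif_pos (hj ▸ j.isLt : (i : ℕ) + 1 < n)]
  exact congrArg v (Fin.ext hj)

theorem update_shiftIn {α : Type*} {n : ℕ} (hn : 0 < n) (v : Fin n → α) (a b : α) :
    update (shiftIn v b) ⟨n - 1, by omega⟩ a = shiftIn v a := by
  funext i
  by_cases hi : i = ⟨n - 1, by omega⟩
  · subst hi
    simp [shiftIn, show ¬ n - 1 + 1 < n by omega]
  · have hne : (i : ℕ) ≠ n - 1 := fun h => hi (Fin.ext h)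
    simp [update_of_ne hi, shiftIn, show (i : ℕ) + 1 < n by omega]

/-- The letter appended at step `s` of `t` sits at position `n - t + s`. -/
theorem iterate_shiftIn_apply {α : Type*} {n : ℕ} (g : (Fin n → α) → α) (w : Fin n → α)
    (t : ℕ) (i : Fin n) (h : n ≤ t + i) :
    ((fun v => shiftIn v (g v))^[t] w) i = g ((fun v => shiftIn v (g v))^[t + i - n] w) := by
  induction t generalizing i with
  | zero => have := i.isLt; omega
  | succ t ih =>
    rw [iterate_succ_apply']
    by_cases hi : (i : ℕ) + 1 < n
    · simp only [shiftIn, dif_pos hi]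
      rw [ih _ (by simp; omega)]
      congr 2
      simp; omega
    · simp only [shiftIn, dif_neg hi]
      congr 2
      omega

theorem card_filter_update {ι α : Type*} [Fintype ι] [DecidableEq ι] (P : α → Prop)
    [DecidablePred P] (u : ι → α) (p : ι) (a : α) :
    #{k | P (update u p a k)} = #{k ∈ univ.erase p | P (u k)} + if P a then 1 else 0 := by
  conv_lhs => rw [← insert_erase (mem_univ p), filter_insert, update_self]
  have hfilter : {k ∈ univ.erase p | P (update u p a k)} = {k ∈ univ.erase p | P (u k)} :=
    filter_congr fun k hk => by rw [update_of_ne (ne_of_mem_erase hk)]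
  split_ifs with hP
  · rw [card_insert_of_notMem (by simp), hfilter]
  · rw [hfilter, add_zero]

theorem LegalRanking.exists_val_eq_zero {n : ℕ} {r : Fin n → Fin n} (hr : LegalRanking r)
    (hn : 0 < n) : ∃ i, (r i : ℕ) = 0 := by
  obtain ⟨i, -, hi⟩ := exists_min_image univ r ⟨⟨0, hn⟩, mem_univ _⟩
  refine ⟨i, ?_⟩
  rw [hr i, card_eq_zero, filter_eq_empty_iff]
  exact fun j _ => not_lt.2 (hi j (mem_univ j))

theorem exists_val_ne_zero_not_legalRanking_update {n : ℕ} (hn : 4 ≤ n) (u : Fin n → Fin n)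
    (p : Fin n) : ∃ a : Fin n, (a : ℕ) ≠ 0 ∧ ¬ LegalRanking (update u p a) := by
  by_contra! h
  have count (a : Fin n) (ha : (a : ℕ) ≠ 0) (j : Fin n) :
      (update u p a j : ℕ) =
        #{k ∈ univ.erase p | u k < update u p a j} + if a < update u p a j then 1 else 0 := by
    rw [← card_filter_update (· < update u p a j)]
    exact h a ha j
  have card_erase : #(univ.erase p) = n - 1 := by simp
  let top : Fin n := ⟨n - 1, by omega⟩
  have lt_top : ∀ k ∈ univ.erase p, u k < top := by
    have htop := count top (by simp [top]; omega) p
    simp only [update_self, lt_irrefl, if_false, add_zero] at htop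
    exact card_filter_eq_iff.1 (by rw [card_erase]; exact htop.symm)
  have le_one : ∀ k ∈ univ.erase p, (u k : ℕ) ≤ 1 := by
    intro k hk
    have hkp := ne_of_mem_erase hk
    have htop := count top (by simp [top]; omega) k
    have hone := count ⟨1, by omega⟩ (by simp) k
    simp only [update_of_ne hkp, (lt_top k hk).not_gt, if_false, add_zero] at htop hone
    split_ifs at hone with h1
    · omega
    · exact not_lt.1 h1
  have two := count ⟨2, by omega⟩ (by simp) p
  simp only [update_self, lt_irrefl, if_false, add_zero] at two
  rw [filter_true_of_mem (fun k hk => Fin.lt_def.2 (by simp; have := le_one k hk; omega)),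
    card_erase] at two
  omega

theorem exists_val_ne_zero_not_legalRanking_shiftIn {n : ℕ} (hn : 4 ≤ n) (v : Fin n → Fin n) :
    ∃ a : Fin n, (a : ℕ) ≠ 0 ∧ ¬ LegalRanking (shiftIn v a) ∧
      ((∀ i, (v i : ℕ) ≠ 0) → (a : ℕ) = 1) := by
  by_cases hv : ∀ i, (v i : ℕ) ≠ 0
  · refine ⟨⟨1, by omega⟩, one_ne_zero, fun hlegal => ?_, fun _ => rfl⟩
    obtain ⟨i, hi⟩ := hlegal.exists_val_eq_zero (by omega)
    simp only [shiftIn] at hi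
    split_ifs at hi
    exact hv _ hi
  · obtain ⟨a, ha, hillegal⟩ :=
      exists_val_ne_zero_not_legalRanking_update hn (shiftIn v ⟨0, by omega⟩) ⟨n - 1, by omega⟩
    rw [update_shiftIn (by omega)] at hillegal
    exact ⟨a, ha, hillegal, fun h => absurd h hv⟩

/-- For `n ≥ 4`, every illegal ranking of `n` contestants is joined to the constant
ranking `22…2` (0-indexed value `1`) by a finite sequence of illegal rankings in which
consecutive words overlap. -/
theorem illegal_rankings_connected_to_all_twos (n : ℕ) (hn : 4 ≤ n)
    (w : Fin n → Fin n) (hw : ¬ LegalRanking w) :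
    ∃ (m : ℕ) (f : Fin (m + 1) → Fin n → Fin n),
      f 0 = w ∧ f (Fin.last m) = (fun _ => (⟨1, by omega⟩ : Fin n)) ∧
      (∀ i, ¬ LegalRanking (f i)) ∧
      (∀ i : Fin m, Overlap (f i.castSucc) (f i.succ)) := by
  choose g hg_ne hg_illegal hg_one using exists_val_ne_zero_not_legalRanking_shiftIn hn
  have zero_free (t : ℕ) (ht : n ≤ t) (i : Fin n) :
      (((fun v => shiftIn v (g v))^[t] w) i : ℕ) ≠ 0 := by
    rw [iterate_shiftIn_apply g w t i (by omega)]
    exact hg_ne _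
  have illegal (t : ℕ) : ¬ LegalRanking ((fun v => shiftIn v (g v))^[t] w) := by
    cases t with
    | zero => exact hw
    | succ t => rw [iterate_succ_apply']; exact hg_illegal _
  refine ⟨2 * n, fun t => (fun v => shiftIn v (g v))^[t] w, rfl, ?_, fun t => illegal t, ?_⟩
  · funext i
    refine Fin.ext (?_ : _ = 1)
    dsimp only
    rw [Fin.val_last, iterate_shiftIn_apply g w _ i (by omega)]
    exact hg_one _ (zero_free _ (by omega))
  · intro i
    dsimp only
    rw [Fin.val_castSucc, Fin.val_succ, iterate_succ_apply']
    exact overlap_shiftIn _ _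
end
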